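/- Let R be a multivariate Gaussian over a finite set X with pointwise standard deviations σ_{R_x} ≤ 1, observed at locations x¹,…,x^T with independent Gaussian observation noise of standard deviation σ_n(x^t) ≤ σ_n. Then the maximum information gain γ^T := max over location sequences of I(Y_{L^T}; R) satisfies γ^T ≥ (ln(1 + σ_n^{-2})/2) · Σ_{t=1}^T σ²_{R_x^t}, where σ²_{R_x^t} denotes the posterior variance at x^t after conditioning on the first t−1 observations. -/

import Mathlib

/-!
The `t`-th summand of the information gain is `½ log(1 + σ_n(x^t)⁻² s_t)`, where `s_t` is the
posterior variance at `x^t`. Each rank-one conditioning step is a Schur complement, so the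
posterior covariances stay positive semidefinite and their diagonals only decrease; hence
`s_t ∈ [0, 1]`. For such `s`, Bernoulli's inequality `(1 + c)^s ≤ 1 + s c` gives
`s log(1 + σ_n⁻²) ≤ log(1 + s σ_n⁻²) ≤ log(1 + s σ_n(x^t)⁻²)`, so the given location
sequence already has information gain at least the left-hand side; the supremum over sequences
is finite because every summand is bounded by a maximum over the finite set `X`.
-/

open Matrix

/-- Posterior covariance matrix of a Gaussian vector with prior covariance `K` after
conditioning on `t` noisy observations at locations `L 0, …, L (t−1)`, with observation-noise
standard deviations `σn`. (Standard rank-one Gaussian conditioning updates.) -/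
noncomputable def postCov {X : Type*} (K : Matrix X X ℝ) (σn : X → ℝ) (L : ℕ → X) :
    ℕ → Matrix X X ℝ
  | 0 => K
  | t + 1 => fun a b =>
      postCov K σn L t a b -
        postCov K σn L t a (L t) * postCov K σn L t (L t) b /
          (postCov K σn L t (L t) (L t) + σn (L t) ^ 2)

/-- The information gain `I(Y_{L^T}; R) = (1/2) Σ_{t<T} ln(1 + σ_n(x^t)⁻² σ²_{R_{x^t}})`
of `T` Gaussian observations at locations `L`, where `σ²_{R_{x^t}}` is the posterior variance
at `x^t` after conditioning on the first `t` observations. -/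
noncomputable def infoGain {X : Type*} (K : Matrix X X ℝ) (σn : X → ℝ) (T : ℕ)
    (L : ℕ → X) : ℝ :=
  (1 / 2) * ∑ t ∈ Finset.range T,
    Real.log (1 + postCov K σn L t (L t) (L t) / σn (L t) ^ 2)

namespace Matrix.PosSemidef

variable {n : Type*} [Fintype n] {A : Matrix n n ℝ}

theorem dotProduct_mulVec_comm (hA : A.PosSemidef) (x y : n → ℝ) :
    x ⬝ᵥ A *ᵥ y = y ⬝ᵥ A *ᵥ x := by
  rw [dotProduct_mulVec, ← mulVec_transpose, ← conjTranspose_eq_transpose_of_trivial, hA.1.eq,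
    dotProduct_comm]

theorem sq_dotProduct_mulVec_le (hA : A.PosSemidef) (x y : n → ℝ) :
    (x ⬝ᵥ A *ᵥ y) ^ 2 ≤ (x ⬝ᵥ A *ᵥ x) * (y ⬝ᵥ A *ᵥ y) := by
  have hquad : ∀ t : ℝ,
      0 ≤ (y ⬝ᵥ A *ᵥ y) * (t * t) + 2 * (x ⬝ᵥ A *ᵥ y) * t + x ⬝ᵥ A *ᵥ x := by
    intro t
    have h := hA.dotProduct_mulVec_nonneg (x + t • y)
    simp only [star_trivial, add_dotProduct, dotProduct_add, mulVec_add, mulVec_smul,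
      dotProduct_smul, smul_dotProduct, smul_eq_mul, hA.dotProduct_mulVec_comm y x] at h
    linarith
  have hdiscrim := discrim_le_zero hquad
  rw [discrim] at hdiscrim
  linarith

theorem sq_mulVec_apply_le (hA : A.PosSemidef) (x : n → ℝ) (l : n) :
    (A *ᵥ x) l ^ 2 ≤ (x ⬝ᵥ A *ᵥ x) * A l l := by
  classical
  have hrow : Pi.single l 1 ⬝ᵥ A *ᵥ x = (A *ᵥ x) l := by simp [single_dotProduct]
  have hdiag : Pi.single l 1 ⬝ᵥ A *ᵥ Pi.single l 1 = A l l := by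
    simp [single_dotProduct, mulVec_single]
  simpa [hrow, hdiag, mul_comm] using hA.sq_dotProduct_mulVec_le (Pi.single l 1) x

theorem sub_inv_smul_vecMulVec (hA : A.PosSemidef) (l : n) {d : ℝ} (hd : A l l ≤ d) :
    (A - d⁻¹ • vecMulVec (A l) (A l)).PosSemidef := by
  have hrank : (vecMulVec (A l) (A l)).IsHermitian := by
    simpa using (posSemidef_vecMulVec_self_star (A l)).1
  refine .of_dotProduct_mulVec_nonneg (hA.1.sub (hrank.smul (IsSelfAdjoint.all d⁻¹))) fun x => ?_
  have hform : star x ⬝ᵥ (A - d⁻¹ • vecMulVec (A l) (A l)) *ᵥ x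
      = x ⬝ᵥ A *ᵥ x - d⁻¹ * (A *ᵥ x) l ^ 2 := by
    simp [sub_mulVec, smul_mulVec, vecMulVec_mulVec, mulVec, dotProduct_comm x, sq]
  have hQ : 0 ≤ x ⬝ᵥ A *ᵥ x := by simpa using hA.dotProduct_mulVec_nonneg x
  rw [hform, sub_nonneg]
  rcases le_or_gt d 0 with hd0 | hd0
  · exact (mul_nonpos_of_nonpos_of_nonneg (inv_nonpos.2 hd0) (sq_nonneg _)).trans hQ
  · rw [inv_mul_le_iff₀ hd0, mul_comm]
    exact (hA.sq_mulVec_apply_le x l).trans (mul_le_mul_of_nonneg_left hd hQ)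

end Matrix.PosSemidef

section GaussianConditioning

variable {X : Type*} (K : Matrix X X ℝ) (σn : X → ℝ) (L : ℕ → X)

theorem postCov_succ_of_isHermitian {t : ℕ} (h : (postCov K σn L t).IsHermitian) :
    postCov K σn L (t + 1) = postCov K σn L t -
      (postCov K σn L t (L t) (L t) + σn (L t) ^ 2)⁻¹ •
        vecMulVec (postCov K σn L t (L t)) (postCov K σn L t (L t)) := by
  ext a b
  have hsymm : postCov K σn L t (L t) a = postCov K σn L t a (L t) := by
    simpa using h.apply a (L t)
  simp only [postCov, Matrix.sub_apply, Matrix.smul_apply, vecMulVec_apply, smul_eq_mul, hsymm]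
  ring

variable [Fintype X]

theorem postCov_posSemidef (hK : K.PosSemidef) (t : ℕ) : (postCov K σn L t).PosSemidef := by
  induction t with
  | zero => exact hK
  | succ t ih =>
    rw [postCov_succ_of_isHermitian K σn L ih.1]
    exact ih.sub_inv_smul_vecMulVec (L t) (le_add_of_nonneg_right (sq_nonneg _))

theorem antitone_postCov_diag (hK : K.PosSemidef) (a : X) :
    Antitone fun t => postCov K σn L t a a := by
  refine antitone_nat_of_succ_le fun t => ?_
  have hA := postCov_posSemidef K σn L hK t
  have hd : 0 ≤ postCov K σn L t (L t) (L t) + σn (L t) ^ 2 := by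
    have := hA.diag_nonneg (i := L t)
    positivity
  rw [postCov_succ_of_isHermitian K σn L hA.1]
  simpa [vecMulVec_apply] using
    mul_nonneg (inv_nonneg.2 hd) (mul_self_nonneg (postCov K σn L t (L t) a))

end GaussianConditioning

theorem Real.mul_log_one_add_le_log_one_add_mul {s p : ℝ} (hs : -1 < s) (hp0 : 0 ≤ p)
    (hp1 : p ≤ 1) : p * Real.log (1 + s) ≤ Real.log (1 + p * s) := by
  have hbase : 0 < 1 + s := by linarith
  rw [← Real.log_rpow hbase]
  exact Real.log_le_log (Real.rpow_pos_of_pos hbase p)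
    (rpow_one_add_le_one_add_mul_self hs.le hp0 hp1)

theorem log_one_add_inv_sq_mul_le_log_one_add_div_sq {σ σmax s : ℝ} (hσ : 0 < σ)
    (hσle : σ ≤ σmax) (hs0 : 0 ≤ s) (hs1 : s ≤ 1) :
    Real.log (1 + σmax⁻¹ ^ 2) * s ≤ Real.log (1 + s / σ ^ 2) := by
  calc Real.log (1 + σmax⁻¹ ^ 2) * s
      = s * Real.log (1 + σmax⁻¹ ^ 2) := mul_comm _ _
    _ ≤ Real.log (1 + s * σmax⁻¹ ^ 2) :=
      Real.mul_log_one_add_le_log_one_add_mul (neg_one_lt_zero.trans_le (sq_nonneg _)) hs0 hs1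
    _ ≤ Real.log (1 + s / σ ^ 2) := by
      rw [div_eq_mul_inv, ← inv_pow]
      gcongr
      exact inv_nonneg.2 (hσ.trans_le hσle).le

section InformationGain

variable {X : Type*} [Fintype X] {K : Matrix X X ℝ} {σn : X → ℝ}

theorem le_infoGain (hK : K.PosSemidef) (hKdiag : ∀ x, K x x ≤ 1) {σmax : ℝ}
    (hσpos : ∀ x, 0 < σn x) (hσle : ∀ x, σn x ≤ σmax) (T : ℕ) (L : ℕ → X) :
    (Real.log (1 + σmax⁻¹ ^ 2) / 2) *
        ∑ t ∈ Finset.range T, postCov K σn L t (L t) (L t) ≤ infoGain K σn T L := by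
  rw [infoGain, Finset.mul_sum, Finset.mul_sum]
  refine Finset.sum_le_sum fun t _ => ?_
  have hvar0 := (postCov_posSemidef K σn L hK t).diag_nonneg (i := L t)
  have hvar1 := (antitone_postCov_diag K σn L hK (L t) t.zero_le).trans (hKdiag (L t))
  have := log_one_add_inv_sq_mul_le_log_one_add_div_sq (hσpos (L t)) (hσle (L t)) hvar0 hvar1
  linarith

theorem bddAbove_infoGain (hK : K.PosSemidef) (T : ℕ) :
    BddAbove {g : ℝ | ∃ L : ℕ → X, g = infoGain K σn T L} := by
  obtain ⟨B, hB⟩ := (Set.finite_range fun x => Real.log (1 + K x x / σn x ^ 2)).bddAbove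
  refine ⟨1 / 2 * (T * B), ?_⟩
  rintro _ ⟨L, rfl⟩
  rw [infoGain]
  gcongr
  calc ∑ t ∈ Finset.range T, Real.log (1 + postCov K σn L t (L t) (L t) / σn (L t) ^ 2)
      ≤ ∑ _t ∈ Finset.range T, B := Finset.sum_le_sum fun t _ => by
        have hvar0 := (postCov_posSemidef K σn L hK t).diag_nonneg (i := L t)
        have hvarK := antitone_postCov_diag K σn L hK (L t) t.zero_le
        refine (Real.log_le_log (by positivity) ?_).trans (hB ⟨L t, rfl⟩)
        gcongr
        exact hvarK
    _ = T * B := by simp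

end InformationGain

theorem stmt_10_general {X : Type*} [Fintype X] (K : Matrix X X ℝ) (hK : K.PosSemidef)
    (hKdiag : ∀ x, K x x ≤ 1) (σn : X → ℝ) (σmax : ℝ) (hσpos : ∀ x, 0 < σn x)
    (hσle : ∀ x, σn x ≤ σmax) (T : ℕ) (L : ℕ → X) :
    (Real.log (1 + σmax⁻¹ ^ 2) / 2) *
        ∑ t ∈ Finset.range T, postCov K σn L t (L t) (L t) ≤
      sSup {g : ℝ | ∃ L' : ℕ → X, g = infoGain K σn T L'} :=
  (le_infoGain hK hKdiag hσpos hσle T L).trans (le_csSup (bddAbove_infoGain hK T) ⟨L, rfl⟩)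

/-- for a Gaussian vector with pointwise variances `K_{x,x} ≤ 1` observed with
independent Gaussian noise of standard deviation `σ_n(x) ≤ σ_n`, the maximum information gain
`γ^T = max_{L^T} I(Y_{L^T}; R)` satisfies
`γ^T ≥ (ln(1 + σ_n⁻²)/2) · Σ_{t<T} σ²_{R_{x^t}}` for any location sequence `L`. -/
theorem stmt_10 {X : Type*} [Fintype X] [Nonempty X] (K : Matrix X X ℝ) (hK : K.PosSemidef)
    (hKdiag : ∀ x, K x x ≤ 1) (σn : X → ℝ) (σmax : ℝ) (hσpos : ∀ x, 0 < σn x)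
    (hσle : ∀ x, σn x ≤ σmax) (T : ℕ) (L : ℕ → X) :
    (Real.log (1 + σmax⁻¹ ^ 2) / 2) *
        ∑ t ∈ Finset.range T, postCov K σn L t (L t) (L t) ≤
      sSup {g : ℝ | ∃ L' : ℕ → X, g = infoGain K σn T L'} :=
  stmt_10_general K hK hKdiag σn σmax hσpos hσle T L
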